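/- Let F = f + g with f differentiable and g convex. Then for any μ > 0 and any x, D_g(x, μ) ≤ ‖∇f(x) + ξ‖² for every subgradient ξ ∈ ∂g(x); in particular D_g(x, μ) ≤ min_{s ∈ ∂F(x)} ‖s‖², so the proximal-PL inequality implies the Kurdyka-Łojasiewicz inequality with exponent 1/2. -/
import Mathlib


open RealInnerProductSpace

/-- The quantity `D_g(x, λ)` from the proximal-PL inequality. -/
noncomputable def Dg {d : ℕ} (f g : EuclideanSpace ℝ (Fin d) → ℝ)
    (x : EuclideanSpace ℝ (Fin d)) (lam : ℝ) : ℝ :=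
  -2 * lam * ⨅ y : EuclideanSpace ℝ (Fin d),
    (⟪gradient f x, y - x⟫ + lam / 2 * ‖y - x‖ ^ 2 + g y - g x)

theorem Dg_le_sq_norm_subgradient
    {d : ℕ} (f g : EuclideanSpace ℝ (Fin d) → ℝ)
    (hdiff : Differentiable ℝ f) (hconv : ConvexOn ℝ Set.univ g) :
    ∀ (μ : ℝ), 0 < μ → ∀ (x ξ : EuclideanSpace ℝ (Fin d)),
      (∀ y, g x + ⟪ξ, y - x⟫ ≤ g y) →
      Dg f g x μ ≤ ‖gradient f x + ξ‖ ^ 2 := by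
  intro μ hμ x ξ hsub
  set s := gradient f x + ξ with hs
  have key : ∀ y : EuclideanSpace ℝ (Fin d),
      -‖s‖ ^ 2 / (2 * μ) ≤
        ⟪gradient f x, y - x⟫ + μ / 2 * ‖y - x‖ ^ 2 + g y - g x := by
    intro y
    have h1 : g x + ⟪ξ, y - x⟫ ≤ g y := hsub y
    have h2 : ⟪s, y - x⟫ = ⟪gradient f x, y - x⟫ + ⟪ξ, y - x⟫ := by
      rw [hs, inner_add_left]
    have h3 : -(‖s‖ * ‖y - x‖) ≤ ⟪s, y - x⟫ := by
      have := abs_real_inner_le_norm s (y - x)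
      linarith [neg_abs_le (⟪s, y - x⟫ : ℝ)]
    have h4 : (0:ℝ) ≤ (μ * ‖y - x‖ - ‖s‖) ^ 2 := sq_nonneg _
    have hn : (0:ℝ) ≤ ‖y - x‖ := norm_nonneg _
    rw [div_le_iff₀ (by positivity : (0:ℝ) < 2 * μ)] at *
    nlinarith [sq_nonneg (μ * ‖y - x‖ - ‖s‖)]
  have hinf : -‖s‖ ^ 2 / (2 * μ) ≤
      ⨅ y : EuclideanSpace ℝ (Fin d),
        (⟪gradient f x, y - x⟫ + μ / 2 * ‖y - x‖ ^ 2 + g y - g x) :=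
    le_ciInf key
  have : Dg f g x μ = -2 * μ * ⨅ y : EuclideanSpace ℝ (Fin d),
      (⟪gradient f x, y - x⟫ + μ / 2 * ‖y - x‖ ^ 2 + g y - g x) := rfl
  rw [this]
  have h2μ : (0:ℝ) < 2 * μ := by positivity
  rw [div_le_iff₀ h2μ] at hinf
  nlinarith [hinf]
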